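/- arXiv:1701.06942 — 3 statements merged into one kernel-verified Lean document; each statement's English description precedes it below -/
import Mathlib

section
/- For every integer n ≥ 1 and every integer m with -(n+1) ≤ m ≤ n+1 and |m| ≤ n-1, one has (m/(n+1))^2 · (1/2 + n/(n^2+1)) ≤ 1/2 - n/(n^2+1). -/
/-! Both sides share the denominator `2 (n² + 1)`: since `1/2 ± n/(n² + 1) = (n ± 1)² / (2 (n² + 1))`,
the factor `(n + 1)²` cancels on the left and the inequality reduces to `m² ≤ (n - 1)²`. -/

lemma half_add_div_sq_add_one (x : ℝ) : 1 / 2 + x / (x ^ 2 + 1) = (x + 1) ^ 2 / (2 * (x ^ 2 + 1)) := by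
  field_simp
  ring

lemma half_sub_div_sq_add_one (x : ℝ) : 1 / 2 - x / (x ^ 2 + 1) = (x - 1) ^ 2 / (2 * (x ^ 2 + 1)) := by
  field_simp
  ring

lemma div_sq_mul_half_add_le_half_sub {x y : ℝ} (h : |y| ≤ x - 1) :
    (y / (x + 1)) ^ 2 * (1 / 2 + x / (x ^ 2 + 1)) ≤ 1 / 2 - x / (x ^ 2 + 1) := by
  have hx : x + 1 ≠ 0 := by linarith [abs_nonneg y]
  have hsq : y ^ 2 ≤ (x - 1) ^ 2 := sq_le_sq' (neg_le_of_abs_le h) (le_of_abs_le h)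
  calc (y / (x + 1)) ^ 2 * (1 / 2 + x / (x ^ 2 + 1))
      = y ^ 2 / (2 * (x ^ 2 + 1)) := by
        rw [half_add_div_sq_add_one, div_pow, div_mul_div_comm, mul_comm ((x + 1) ^ 2),
          mul_div_mul_right _ _ (pow_ne_zero 2 hx)]
    _ ≤ (x - 1) ^ 2 / (2 * (x ^ 2 + 1)) := by gcongr
    _ = 1 / 2 - x / (x ^ 2 + 1) := (half_sub_div_sq_add_one x).symm

theorem stmt_0_general (n : ℤ) (m : ℤ)
    (h3 : |m| ≤ n - 1) :
    ((m : ℝ)/(n+1))^2 * (1/2 + n/(n^2+1)) ≤ 1/2 - n/(n^2+1) :=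
  div_sq_mul_half_add_le_half_sub (by exact_mod_cast h3)

theorem stmt_0 (n : ℤ) (hn : 1 ≤ n) (m : ℤ) (h1 : -(n+1) ≤ m) (h2 : m ≤ n+1)
    (h3 : |m| ≤ n - 1) :
    ((m : ℝ)/(n+1))^2 * (1/2 + n/(n^2+1)) ≤ 1/2 - n/(n^2+1) :=
  stmt_0_general n m h3
end

section
/- Let n ≥ 2 be an integer, ε a real with 0 ≤ ε ≤ 1/2, and p a real polynomial of degree at most 2 that is nonnegative on the interval [0, n], with p(0) ≤ ε, p(n-1) ≤ ε, and p(n) ≥ 1-ε. Then ε ≥ 1/2 - n/(n^2+1). -/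
/-!
Any polynomial `q` of degree at most two satisfies the four-point relation
`(m + 1) q(0) + m (m + 1) q(m - 1) - (m - 1)² q(m) = 4 m q((m - 1)/2)`.
If `q ≥ 0` at the midpoint `(m - 1)/2`, while `q(0), q(m - 1) ≤ ε` and `q(m) ≥ 1 - ε`, this gives
`(m - 1)² ≤ 2 ε (m² + 1)`, which is the claimed bound.
-/

open Polynomial

namespace Polynomial

theorem eval_eq_of_natDegree_le_two {R : Type*} [CommSemiring R] {p : R[X]}
    (hp : p.natDegree ≤ 2) (x : R) :
    p.eval x = p.coeff 2 * x ^ 2 + p.coeff 1 * x + p.coeff 0 := by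
  rw [eval_eq_sum_range' (by omega : p.natDegree < 3)]
  simp only [Finset.sum_range_succ, Finset.sum_range_zero]
  ring

theorem eval_midpoint_identity_of_natDegree_le_two {R : Type*} [Field R] [NeZero (2 : R)]
    {p : R[X]} (hp : p.natDegree ≤ 2) (m : R) :
    (m + 1) * p.eval 0 + m * (m + 1) * p.eval (m - 1) - (m - 1) ^ 2 * p.eval m
      = 4 * m * p.eval ((m - 1) / 2) := by
  simp only [eval_eq_of_natDegree_le_two hp]
  field_simp
  ring

end Polynomial

theorem one_half_sub_div_sq_add_one (m : ℝ) :
    1 / 2 - m / (m ^ 2 + 1) = (m - 1) ^ 2 / (2 * (m ^ 2 + 1)) := by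
  field_simp
  ring

theorem one_half_sub_div_sq_add_one_le_of_natDegree_le_two {p : ℝ[X]} (hp : p.natDegree ≤ 2) {m ε : ℝ}
    (hm : 0 ≤ m) (hmid : 0 ≤ p.eval ((m - 1) / 2))
    (h0 : p.eval 0 ≤ ε) (h1 : p.eval (m - 1) ≤ ε) (h2 : 1 - ε ≤ p.eval m) :
    1 / 2 - m / (m ^ 2 + 1) ≤ ε := by
  have hcomb : 0 ≤ (m + 1) * p.eval 0 + m * (m + 1) * p.eval (m - 1) - (m - 1) ^ 2 * p.eval m := by
    rw [eval_midpoint_identity_of_natDegree_le_two hp]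
    positivity
  have hsq : (m - 1) ^ 2 ≤ ε * (2 * (m ^ 2 + 1)) := by
    have := mul_le_mul_of_nonneg_left h0 (by linarith : (0 : ℝ) ≤ m + 1)
    have := mul_le_mul_of_nonneg_left h1 (by positivity : (0 : ℝ) ≤ m * (m + 1))
    have := mul_le_mul_of_nonneg_left h2 (sq_nonneg (m - 1))
    linarith
  rw [one_half_sub_div_sq_add_one, div_le_iff₀ (by positivity)]
  exact hsq

theorem stmt_7_general (n : ℤ) (hn : 2 ≤ n) (ε : ℝ)
    (p : Polynomial ℝ) (hdeg : p.natDegree ≤ 2)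
    (hnonneg : ∀ s ∈ Set.Icc (0 : ℝ) (n : ℝ), 0 ≤ p.eval s)
    (h0 : p.eval 0 ≤ ε) (h1 : p.eval ((n : ℝ) - 1) ≤ ε)
    (h2 : p.eval (n : ℝ) ≥ 1 - ε) :
    ε ≥ 1/2 - (n : ℝ)/((n : ℝ)^2+1) := by
  have hn' : (2 : ℝ) ≤ n := by exact_mod_cast hn
  have hmid : ((n : ℝ) - 1) / 2 ∈ Set.Icc (0 : ℝ) n := ⟨by linarith, by linarith⟩
  exact one_half_sub_div_sq_add_one_le_of_natDegree_le_two hdeg (by linarith) (hnonneg _ hmid) h0 h1 h2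

theorem stmt_7 (n : ℤ) (hn : 2 ≤ n) (ε : ℝ) (hε0 : 0 ≤ ε) (hε1 : ε ≤ 1/2)
    (p : Polynomial ℝ) (hdeg : p.natDegree ≤ 2)
    (hnonneg : ∀ s ∈ Set.Icc (0 : ℝ) (n : ℝ), 0 ≤ p.eval s)
    (h0 : p.eval 0 ≤ ε) (h1 : p.eval ((n : ℝ) - 1) ≤ ε)
    (h2 : p.eval (n : ℝ) ≥ 1 - ε) :
    ε ≥ 1/2 - (n : ℝ)/((n : ℝ)^2+1) :=
  stmt_7_general n hn ε p hdeg hnonneg h0 h1 h2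
end

section
/- Suppose a one-query quantum algorithm computes AND_n with worst-case error probability ε. Then there exists a real polynomial p of degree at most 2, nonnegative on [0, n], with p(s) ≤ ε for s ∈ {0, n-1} and p(n) ≥ 1 - ε. Consequently ε ≥ 1/2 - n/(n^2+1). -/
/-!
Each square in the acceptance probability is `(a + ∑ⱼ bⱼ x̂ⱼ)²` with `x̂` a sign vector. Replacing it by
a quadratic in the Hamming weight that is exact at weights `0` and `n` and at most the average at
weight `n - 1`, and summing, gives `p`. Since `p` is quadratic, interpolation
at `0`, `(n-1)/2`, `n-1` writes `(n-1)² p(n)` as a combination of these three values in which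
`p((n-1)/2) ≥ 0` enters with a negative sign; hence `(n-1)²(1-ε) ≤ (n+1)²ε`.
-/

/-- `AND_n` of a Boolean input. -/
def ANDn {n : ℕ} (x : Fin n → Bool) : Bool := decide (∀ i, x i = true)

open MvPolynomial in
theorem MvPolynomial.eval_eq_of_totalDegree_le_one {R σ : Type*} [CommSemiring R] [Fintype σ]
    {q : MvPolynomial σ R} (h : q.totalDegree ≤ 1) (z : σ → R) :
    eval z q = coeff 0 q + ∑ j, coeff (Finsupp.single j 1) q * z j := by
  classical
  suffices q = C (coeff 0 q) + ∑ j, C (coeff (Finsupp.single j 1) q) * X j by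
    conv_lhs => rw [this]
    simp
  ext d
  have hd : d = 0 ∨ (∃ j, d = Finsupp.single j 1) ∨ coeff d q = 0 := by
    by_cases hs : d ∈ q.support
    · rcases Nat.le_one_iff_eq_zero_or_eq_one.1 ((le_totalDegree hs).trans h) with h0 | h1
      · exact Or.inl (Finsupp.ext (by simpa [Finsupp.sum] using h0))
      · exact Or.inr (Or.inl ((Finsupp.sum_eq_one_iff d).1 h1))
    · exact Or.inr (Or.inr (notMem_support_iff.1 hs))
  simp only [coeff_add, coeff_C, coeff_sum, coeff_C_mul, coeff_X, mul_ite, mul_one, mul_zero]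
  rcases hd with rfl | ⟨j, rfl⟩ | hd
  · simp
  · simp [(Finsupp.single_ne_zero.2 one_ne_zero).symm, Finsupp.single_left_inj]
  · rw [ite_eq_right_iff.2 fun h0 => h0 ▸ hd,
      Finset.sum_eq_zero fun j _ => ite_eq_right_iff.2 fun hj => hj ▸ hd, add_zero, hd]

open Polynomial

/-- `1 - 2s/n` is the mean sign of an input of Hamming weight `s`; this quadratic in `s` stands in
for the average of `(a + ∑ⱼ bⱼ x̂ⱼ)²` over the inputs of weight `s`. -/
noncomputable def symmetrizedSquare (n : ℕ) (a : ℝ) (b : Fin n → ℝ) : ℝ[X] :=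
  (C a + C (∑ j, b j) * (1 - C (2 / n : ℝ) * X)) ^ 2
    + C (∑ j, b j ^ 2 - (∑ j, b j) ^ 2 / n : ℝ) * (1 - (1 - C (2 / n : ℝ) * X) ^ 2)

section symmetrizedSquare

variable {n : ℕ} (a : ℝ) (b : Fin n → ℝ)

theorem eval_symmetrizedSquare (s : ℝ) :
    (symmetrizedSquare n a b).eval s =
      (a + (∑ j, b j) * (1 - 2 / n * s)) ^ 2
        + (∑ j, b j ^ 2 - (∑ j, b j) ^ 2 / n) * (1 - (1 - 2 / n * s) ^ 2) := by
  simp [symmetrizedSquare, eval_finsetSum]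

theorem natDegree_symmetrizedSquare_le : (symmetrizedSquare n a b).natDegree ≤ 2 := by
  unfold symmetrizedSquare
  compute_degree

theorem sq_sum_div_le_sum_sq : (∑ j, b j) ^ 2 / n ≤ ∑ j, b j ^ 2 := by
  refine div_le_of_le_mul₀ n.cast_nonneg (Finset.sum_nonneg fun j _ => sq_nonneg (b j)) ?_
  simpa [mul_comm] using sq_sum_le_card_mul_sum_sq (s := Finset.univ) (f := b)

theorem symmetrizedSquare_eval_nonneg {s : ℝ} (hs : s ∈ Set.Icc 0 (n : ℝ)) :
    0 ≤ (symmetrizedSquare n a b).eval s := by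
  have hsn : s / n ≤ 1 := div_le_one_of_le₀ hs.2 n.cast_nonneg
  have ht : 0 ≤ 1 - (1 - 2 / n * s) ^ 2 := by
    have : 0 ≤ s / n := div_nonneg hs.1 n.cast_nonneg
    rw [div_mul_eq_mul_div, mul_div_assoc]
    nlinarith
  rw [eval_symmetrizedSquare]
  have := sq_sum_div_le_sum_sq b
  positivity

theorem symmetrizedSquare_eval_zero :
    (symmetrizedSquare n a b).eval 0 = (a + ∑ j, b j) ^ 2 := by
  simp [eval_symmetrizedSquare]

theorem symmetrizedSquare_eval_natCast (hn : n ≠ 0) :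
    (symmetrizedSquare n a b).eval (n : ℝ) = (a - ∑ j, b j) ^ 2 := by
  rw [eval_symmetrizedSquare]
  field_simp
  ring

theorem mul_symmetrizedSquare_eval_sub_one_le (hn : n ≠ 0) :
    n * (symmetrizedSquare n a b).eval ((n : ℝ) - 1) ≤ ∑ k, (a - ∑ j, b j + 2 * b k) ^ 2 := by
  set c := ∑ j, b j
  have hsum :
      ∑ k, (a - c + 2 * b k) ^ 2 = n * (a - c) ^ 2 + 4 * (a - c) * c + 4 * ∑ j, b j ^ 2 := by
    simp only [add_sq, Finset.sum_add_distrib, Finset.sum_const, Finset.card_univ,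
      Fintype.card_fin, nsmul_eq_mul, mul_pow, ← Finset.mul_sum, c]
    ring
  have heval : n * (symmetrizedSquare n a b).eval ((n : ℝ) - 1) = n * (a - c) ^ 2
      + 4 * (a - c) * c + 4 * ∑ j, b j ^ 2 - 4 / n * (∑ j, b j ^ 2 - c ^ 2 / n) := by
    rw [eval_symmetrizedSquare]
    field_simp
    ring
  have := sub_nonneg.2 (sq_sum_div_le_sum_sq b)
  have : 0 ≤ 4 / (n : ℝ) * (∑ j, b j ^ 2 - c ^ 2 / n) := by positivity
  linarith

end symmetrizedSquare

/-- Lagrange interpolation of a quadratic at the nodes `0`, `(N-1)/2`, `N-1`, evaluated at `N`. -/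
theorem Polynomial.sq_sub_one_mul_eval_eq {p : ℝ[X]} (hp : p.natDegree ≤ 2) (N : ℝ) :
    (N - 1) ^ 2 * p.eval N = (N + 1) * p.eval 0 - 4 * N * p.eval ((N - 1) / 2)
      + N * (N + 1) * p.eval (N - 1) := by
  simp only [eval_eq_sum_range' (Nat.lt_succ_of_le hp), Finset.sum_range_succ,
    Finset.sum_range_zero]
  ring

theorem half_sub_div_le_of_natDegree_le_two {p : ℝ[X]} (hp : p.natDegree ≤ 2) {N ε : ℝ}
    (hN : 1 ≤ N) (hnonneg : ∀ s ∈ Set.Icc 0 N, 0 ≤ p.eval s) (h0 : p.eval 0 ≤ ε)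
    (h1 : p.eval (N - 1) ≤ ε) (hN' : 1 - ε ≤ p.eval N) :
    1 / 2 - N / (N ^ 2 + 1) ≤ ε := by
  have hmid : 0 ≤ 4 * N * p.eval ((N - 1) / 2) :=
    mul_nonneg (by linarith) (hnonneg _ ⟨by linarith, by linarith⟩)
  have key : (N - 1) ^ 2 * (1 - ε) ≤ (N + 1) ^ 2 * ε := calc
    (N - 1) ^ 2 * (1 - ε) ≤ (N - 1) ^ 2 * p.eval N := by gcongr
    _ = (N + 1) * p.eval 0 - 4 * N * p.eval ((N - 1) / 2) + N * (N + 1) * p.eval (N - 1) :=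
      p.sq_sub_one_mul_eval_eq hp N
    _ ≤ (N + 1) * ε + N * (N + 1) * ε := by
      have := mul_le_mul_of_nonneg_left h0 (by linarith : 0 ≤ N + 1)
      have := mul_le_mul_of_nonneg_left h1 (by positivity : 0 ≤ N * (N + 1))
      linarith
    _ = (N + 1) ^ 2 * ε := by ring
  rw [show 1 / 2 - N / (N ^ 2 + 1) = (N - 1) ^ 2 / (2 * (N ^ 2 + 1)) by field_simp; ring,
    div_le_iff₀ (by positivity)]
  linarith

theorem sum_mul_ite_ne_neg_one {n : ℕ} (b : Fin n → ℝ) (k : Fin n) :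
    ∑ j, b j * (if j ≠ k then (-1 : ℝ) else 1) = 2 * b k - ∑ j, b j := by
  have (j : Fin n) :
      b j * (if j ≠ k then (-1 : ℝ) else 1) = 2 * (if j = k then b j else 0) - b j := by
    by_cases hj : j = k <;> simp [hj, two_mul]
  rw [Finset.sum_congr rfl fun j _ => this j, Finset.sum_sub_distrib, ← Finset.mul_sum,
    Finset.sum_ite_eq' Finset.univ k b, if_pos (Finset.mem_univ k)]

theorem eval_sum_symmetrizedSquare_sub_one_le {n m : ℕ} (hn : n ≠ 0) (α : Fin m → ℝ)
    (β : Fin m → Fin n → ℝ) {ε : ℝ} (h : ∀ k, ∑ i, (α i - ∑ j, β i j + 2 * β i k) ^ 2 ≤ ε) :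
    (∑ i, symmetrizedSquare n (α i) (β i)).eval ((n : ℝ) - 1) ≤ ε := by
  have hpos : (0 : ℝ) < n := by positivity
  refine le_of_mul_le_mul_left ?_ hpos
  calc (n : ℝ) * (∑ i, symmetrizedSquare n (α i) (β i)).eval ((n : ℝ) - 1)
      ≤ ∑ i, ∑ k, (α i - ∑ j, β i j + 2 * β i k) ^ 2 := by
        rw [eval_finsetSum, Finset.mul_sum]
        exact Finset.sum_le_sum fun i _ => mul_symmetrizedSquare_eval_sub_one_le _ _ hn
    _ ≤ n * ε := by
        rw [Finset.sum_comm]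
        simpa using Finset.sum_le_sum fun k (_ : k ∈ Finset.univ) => h k

theorem stmt_17_general (n : ℕ) (hn : 1 ≤ n) (ε : ℝ)
    -- acceptance probability of the one-query algorithm, as a sum of squares of
    -- multilinear polynomials of degree ≤ 1 in the signs x̂ᵢ = (-1)^{xᵢ}
    (A : (Fin n → Bool) → ℝ) (m : ℕ) (q : Fin m → MvPolynomial (Fin n) ℝ)
    (hdeg : ∀ i, (q i).totalDegree ≤ 1)
    (hA : ∀ x : Fin n → Bool,
      A x = ∑ i, (MvPolynomial.eval (fun j => if x j then (-1 : ℝ) else 1) (q i))^2)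
    -- the algorithm computes ANDₙ with worst-case error probability ε
    (hcorrect : ∀ x : Fin n → Bool,
      (ANDn x = true → A x ≥ 1 - ε) ∧ (ANDn x = false → A x ≤ ε)) :
    (∃ p : Polynomial ℝ, p.natDegree ≤ 2 ∧
      (∀ s ∈ Set.Icc (0 : ℝ) (n : ℝ), 0 ≤ p.eval s) ∧
      p.eval 0 ≤ ε ∧ p.eval ((n : ℝ) - 1) ≤ ε ∧ p.eval (n : ℝ) ≥ 1 - ε) ∧
    ε ≥ 1/2 - (n : ℝ)/((n : ℝ)^2+1) := by
  have hn0 : n ≠ 0 := Nat.one_le_iff_ne_zero.1 hn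
  set α := fun i => (q i).coeff 0
  set β := fun i j => (q i).coeff (Finsupp.single j 1)
  have hA' (x : Fin n → Bool) :
      A x = ∑ i, (α i + ∑ j, β i j * if x j then (-1 : ℝ) else 1) ^ 2 := by
    simp only [hA, MvPolynomial.eval_eq_of_totalDegree_le_one (hdeg _), α, β]
  set p := ∑ i, symmetrizedSquare n (α i) (β i)
  have hp0 : p.eval 0 ≤ ε := by
    have := (hcorrect fun _ => false).2 (by simpa [ANDn] using ⟨⟨0, hn⟩⟩)
    simpa [p, eval_finsetSum, symmetrizedSquare_eval_zero, hA'] using this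
  have hpn : 1 - ε ≤ p.eval (n : ℝ) := by
    have := (hcorrect fun _ => true).1 (by simp [ANDn])
    simpa [p, eval_finsetSum, symmetrizedSquare_eval_natCast _ _ hn0, hA', sub_eq_add_neg]
      using this
  have hpn1 : p.eval ((n : ℝ) - 1) ≤ ε := by
    refine eval_sum_symmetrizedSquare_sub_one_le hn0 α β fun k => ?_
    have := (hcorrect fun j => decide (j ≠ k)).2 (by simp [ANDn])
    rw [hA'] at this
    convert this using 3 with i
    simp only [decide_eq_true_eq, sum_mul_ite_ne_neg_one]
    ring
  have hdeg2 : p.natDegree ≤ 2 :=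
    natDegree_sum_le_of_forall_le _ _ fun i _ => natDegree_symmetrizedSquare_le _ _
  have hnonneg (s) (hs : s ∈ Set.Icc (0 : ℝ) n) : 0 ≤ p.eval s := by
    rw [eval_finsetSum]
    exact Finset.sum_nonneg fun i _ => symmetrizedSquare_eval_nonneg _ _ hs
  exact ⟨⟨p, hdeg2, hnonneg, hp0, hpn1, hpn⟩,
    half_sub_div_le_of_natDegree_le_two hdeg2 (by exact_mod_cast hn) hnonneg hp0 hpn1 hpn⟩

theorem stmt_17 (n : ℕ) (hn : 1 ≤ n) (ε : ℝ) (hε : 0 ≤ ε)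
    -- acceptance probability of the one-query algorithm, as a sum of squares of
    -- multilinear polynomials of degree ≤ 1 in the signs x̂ᵢ = (-1)^{xᵢ}
    (A : (Fin n → Bool) → ℝ) (m : ℕ) (q : Fin m → MvPolynomial (Fin n) ℝ)
    (hdeg : ∀ i, (q i).totalDegree ≤ 1)
    (hA : ∀ x : Fin n → Bool,
      A x = ∑ i, (MvPolynomial.eval (fun j => if x j then (-1 : ℝ) else 1) (q i))^2)
    -- the algorithm computes ANDₙ with worst-case error probability ε
    (hcorrect : ∀ x : Fin n → Bool,
      (ANDn x = true → A x ≥ 1 - ε) ∧ (ANDn x = false → A x ≤ ε)) :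
    (∃ p : Polynomial ℝ, p.natDegree ≤ 2 ∧
      (∀ s ∈ Set.Icc (0 : ℝ) (n : ℝ), 0 ≤ p.eval s) ∧
      p.eval 0 ≤ ε ∧ p.eval ((n : ℝ) - 1) ≤ ε ∧ p.eval (n : ℝ) ≥ 1 - ε) ∧
    ε ≥ 1/2 - (n : ℝ)/((n : ℝ)^2+1) :=
  stmt_17_general n hn ε A m q hdeg hA hcorrect
end
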